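/- arXiv:2012.13270 — 2 statements merged into one kernel-verified Lean document; each statement's English description precedes it below -/
import Mathlib

section
/- Let (V, ω) be a finite-dimensional symplectic vector space, C a coisotropic subspace, and π : C → C/C^⊥ the projection onto the symplectic reduction. If L is a lagrangian subspace of V, then L̄ = π(L ∩ C) is a lagrangian subspace of C/C^⊥ with its induced symplectic form. -/
open Module

variable {K V : Type*} [Field K] [AddCommGroup V] [Module K V]

/-- The symplectic orthogonal `W^⊥ = {v ∈ V : ω(v,w) = 0 for all w ∈ W}` of a subspace `W`
with respect to a bilinear form `B`. -/
def sympOrtho (B : V →ₗ[K] V →ₗ[K] K) (W : Submodule K V) : Submodule K V where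
  carrier := {v | ∀ w ∈ W, B v w = 0}
  add_mem' := by
    intro a b ha hb w hw
    simp only [map_add, LinearMap.add_apply, ha w hw, hb w hw, add_zero]
  zero_mem' := by
    intro w hw
    simp
  smul_mem' := by
    intro c a ha w hw
    simp only [map_smul, LinearMap.smul_apply, ha w hw, smul_zero]

section SympOrtho

variable {B : V →ₗ[K] V →ₗ[K] K}

theorem sympOrtho_sup (W₁ W₂ : Submodule K V) :
    sympOrtho B (W₁ ⊔ W₂) = sympOrtho B W₁ ⊓ sympOrtho B W₂ := by
  ext v
  refine ⟨fun h => ⟨fun w hw => h w (Submodule.mem_sup_left hw),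
    fun w hw => h w (Submodule.mem_sup_right hw)⟩, ?_⟩
  rintro ⟨h₁, h₂⟩ w hw
  obtain ⟨a, ha, b, hb, rfl⟩ := Submodule.mem_sup.mp hw
  rw [map_add, h₁ a ha, h₂ b hb, add_zero]

theorem sympOrtho_eq_orthogonal (hB : B.IsRefl) (W : Submodule K V) :
    sympOrtho B W = LinearMap.BilinForm.orthogonal B W := by
  ext v
  exact ⟨fun h w hw => hB _ _ (h w hw), fun h w hw => hB _ _ (h w hw)⟩

theorem sympOrtho_sympOrtho [FiniteDimensional K V] (hB : B.IsRefl) (hnd : B.SeparatingLeft)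
    (W : Submodule K V) : sympOrtho B (sympOrtho B W) = W := by
  rw [sympOrtho_eq_orthogonal hB, sympOrtho_eq_orthogonal hB]
  exact LinearMap.BilinForm.orthogonal_orthogonal
    (hB.nondegenerate_iff_separatingLeft.mpr hnd) hB W

theorem sympOrtho_inf [FiniteDimensional K V] (hB : B.IsRefl) (hnd : B.SeparatingLeft)
    (W₁ W₂ : Submodule K V) :
    sympOrtho B (W₁ ⊓ W₂) = sympOrtho B W₁ ⊔ sympOrtho B W₂ := by
  conv_lhs => rw [← sympOrtho_sympOrtho hB hnd W₁, ← sympOrtho_sympOrtho hB hnd W₂,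
    ← sympOrtho_sup, sympOrtho_sympOrtho hB hnd]

end SympOrtho

/-- The reduction `L̄ = π(L ∩ C)` of `L` in `C/C^⊥`. -/
def sympReduction (B : V →ₗ[K] V →ₗ[K] K) (C L : Submodule K V) :
    Submodule K (C ⧸ (sympOrtho B C).comap C.subtype) :=
  (L.comap C.subtype).map ((sympOrtho B C).comap C.subtype).mkQ

section Reduction

variable {B : V →ₗ[K] V →ₗ[K] K} {C L : Submodule K V}
  {Bbar : (C ⧸ (sympOrtho B C).comap C.subtype) →ₗ[K]
    (C ⧸ (sympOrtho B C).comap C.subtype) →ₗ[K] K}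

theorem sympReduction_le_sympOrtho
    (hBbar : ∀ v w : C, Bbar (Submodule.Quotient.mk v) (Submodule.Quotient.mk w) = B v w)
    (hL : L ≤ sympOrtho B L) :
    sympReduction B C L ≤ sympOrtho Bbar (sympReduction B C L) := by
  rintro _ ⟨a, ha, rfl⟩ _ ⟨b, hb, rfl⟩
  exact (hBbar a b).trans (hL ha b hb)

theorem sympOrtho_sympReduction_le [FiniteDimensional K V] (hB : B.IsRefl)
    (hnd : B.SeparatingLeft) (hC : sympOrtho B C ≤ C)
    (hBbar : ∀ v w : C, Bbar (Submodule.Quotient.mk v) (Submodule.Quotient.mk w) = B v w)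
    (hL : sympOrtho B L ≤ L) :
    sympOrtho Bbar (sympReduction B C L) ≤ sympReduction B C L := by
  intro x hx
  obtain ⟨c, rfl⟩ := Submodule.mkQ_surjective _ x
  have hc : (c : V) ∈ sympOrtho B (L ⊓ C) := by
    rintro w ⟨hwL, hwC⟩
    rw [← hBbar c ⟨w, hwC⟩]
    exact hx _ (Submodule.mem_map_of_mem (p := L.comap C.subtype) hwL)
  -- `(L ∩ C)^⊥ = L^⊥ + C^⊥ ⊆ L + C^⊥`, so `c` differs from a vector of `L` by one of `C^⊥ ⊆ C`.
  rw [sympOrtho_inf hB hnd] at hc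
  obtain ⟨l, hl, z, hz, hlz⟩ := Submodule.mem_sup.mp hc
  have hlC : l ∈ C := by
    rw [← add_sub_cancel_right l z, hlz]
    exact C.sub_mem c.2 (hC hz)
  refine ⟨⟨l, hlC⟩, hL hl, (Submodule.Quotient.eq _).mpr ?_⟩
  show l - (c : V) ∈ sympOrtho B C
  rw [← hlz, sub_add_cancel_left]
  exact neg_mem hz

end Reduction

/-- If `L` is lagrangian in a finite-dimensional symplectic vector space `V`, then its
reduction `L̄ = π(L ∩ C)` is lagrangian in the symplectic reduction `C/C^⊥` (with the
induced form `ω̄` satisfying `ω̄([v],[w]) = ω(v,w)`). -/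
theorem stmt10 [FiniteDimensional K V] (B : V →ₗ[K] V →ₗ[K] K)
    (halt : ∀ v, B v v = 0) (hnd : ∀ v, (∀ w, B v w = 0) → v = 0)
    (C : Submodule K V) (hC : sympOrtho B C ≤ C)
    (Bbar : (C ⧸ (sympOrtho B C).comap C.subtype) →ₗ[K]
        (C ⧸ (sympOrtho B C).comap C.subtype) →ₗ[K] K)
    (hBbar : ∀ v w : C, Bbar (Submodule.Quotient.mk v) (Submodule.Quotient.mk w)
      = B (v : V) (w : V))
    (L : Submodule K V) (hL : L = sympOrtho B L) :
    (L.comap C.subtype).map ((sympOrtho B C).comap C.subtype).mkQ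
      = sympOrtho Bbar ((L.comap C.subtype).map ((sympOrtho B C).comap C.subtype).mkQ) := by
  have hB : B.IsRefl := LinearMap.IsAlt.isRefl halt
  exact le_antisymm (sympReduction_le_sympOrtho hBbar hL.le)
    (sympOrtho_sympReduction_le hB hnd hC hBbar hL.ge)
end

section
/- Let V be a vector space over ℝ, ρ_α ∈ End(V), v_α ∈ V, w_α ∈ V* for indices α in a finite set, and define biaffine Hamiltonians on T*V = V* × V by H_α(p,q) = −p(ρ_α q) + p(v_α) + w_α(q). Then the involutivity relations {H_α, H_β} = f^γ_{αβ} H_γ (as identities of functions on V* × V, with respect to the canonical Poisson bracket) hold for constants f^γ_{αβ} if and only if: (1) [ρ_α, ρ_β] = f^γ_{αβ} ρ_γ, (2) ρ_α v_β − ρ_β v_α = f^γ_{αβ} v_γ, (3) w_α ∘ ρ_β − w_β ∘ ρ_α = f^γ_{αβ} w_γ, and (4) w_β(v_α) = w_α(v_β), for all α, β. -/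
/-- The canonical Poisson bracket
`{f,g}(p,q) = Σᵢ (∂f/∂pᵢ ∂g/∂qᵢ − ∂f/∂qᵢ ∂g/∂pᵢ)` on `T*V = V* × V` in linear
coordinates (`V = ℝⁿ`), where a point `x = (p,q)` has momentum part `x.1` and position
part `x.2`. -/
noncomputable def poissonBracket (n : ℕ) (f g : ((Fin n → ℝ) × (Fin n → ℝ)) → ℝ)
    (x : (Fin n → ℝ) × (Fin n → ℝ)) : ℝ :=
  ∑ i, (fderiv ℝ f x (Pi.single i 1, 0) * fderiv ℝ g x (0, Pi.single i 1)
      - fderiv ℝ f x (0, Pi.single i 1) * fderiv ℝ g x (Pi.single i 1, 0))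

/-- The biaffine Hamiltonian `H(p,q) = −p(ρ q) + p(v) + w(q)`, with the endomorphism `ρ`
written in linear coordinates as a matrix, `v ∈ V`, and the covector `w ∈ V*`. -/
noncomputable def biaffHam (n : ℕ) (ρ : Matrix (Fin n) (Fin n) ℝ) (v w : Fin n → ℝ)
    (x : (Fin n → ℝ) × (Fin n → ℝ)) : ℝ :=
  -(∑ i, x.1 i * ρ.mulVec x.2 i) + (∑ i, x.1 i * v i) + ∑ i, w i * x.2 i

noncomputable def Pc (n : ℕ) (i : Fin n) : ((Fin n → ℝ) × (Fin n → ℝ)) →L[ℝ] ℝ :=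
  (ContinuousLinearMap.proj i).comp (ContinuousLinearMap.fst ℝ (Fin n → ℝ) (Fin n → ℝ))
noncomputable def Qc (n : ℕ) (i : Fin n) : ((Fin n → ℝ) × (Fin n → ℝ)) →L[ℝ] ℝ :=
  (ContinuousLinearMap.proj i).comp (ContinuousLinearMap.snd ℝ (Fin n → ℝ) (Fin n → ℝ))

lemma biaffHam_eq (n : ℕ) (ρ : Matrix (Fin n) (Fin n) ℝ) (v w : Fin n → ℝ) :
    biaffHam n ρ v w = fun x =>
      (∑ i, ∑ j, (-(ρ i j)) * (x.1 i * x.2 j)) + (∑ i, v i * x.1 i) + (∑ i, w i * x.2 i) := by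
  funext x
  simp only [biaffHam, Matrix.mulVec, dotProduct, Finset.mul_sum,
    ← Finset.sum_neg_distrib]
  congr 1
  congr 1
  · exact Finset.sum_congr rfl fun i _ => Finset.sum_congr rfl fun j _ => by ring
  · exact Finset.sum_congr rfl fun i _ => by ring

lemma biaffHam_hasFDerivAt (n : ℕ) (ρ : Matrix (Fin n) (Fin n) ℝ) (v w : Fin n → ℝ)
    (x : ((Fin n → ℝ) × (Fin n → ℝ))) :
    HasFDerivAt (biaffHam n ρ v w)
      ((∑ i, ∑ j, (-(ρ i j)) • (x.1 i • Qc n j + x.2 j • Pc n i))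
        + (∑ i, v i • Pc n i) + (∑ i, w i • Qc n i)) x := by
  rw [biaffHam_eq]
  have hP : ∀ i, HasFDerivAt (fun y : ((Fin n → ℝ) × (Fin n → ℝ)) => y.1 i) (Pc n i) x :=
    fun i => (Pc n i).hasFDerivAt
  have hQ : ∀ i, HasFDerivAt (fun y : ((Fin n → ℝ) × (Fin n → ℝ)) => y.2 i) (Qc n i) x :=
    fun i => (Qc n i).hasFDerivAt
  apply HasFDerivAt.add
  apply HasFDerivAt.add
  · exact HasFDerivAt.fun_sum (fun i _ => HasFDerivAt.fun_sum (fun j _ =>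
      HasFDerivAt.const_mul ((hP i).mul (hQ j)) _))
  · exact HasFDerivAt.fun_sum (fun i _ => HasFDerivAt.const_mul (hP i) _)
  · exact HasFDerivAt.fun_sum (fun i _ => HasFDerivAt.const_mul (hQ i) _)

lemma fderiv_biaffHam_p (n : ℕ) (ρ : Matrix (Fin n) (Fin n) ℝ) (v w : Fin n → ℝ)
    (x : ((Fin n → ℝ) × (Fin n → ℝ))) (k : Fin n) :
    fderiv ℝ (biaffHam n ρ v w) x (Pi.single k 1, (0 : Fin n → ℝ))
      = -(ρ.mulVec x.2 k) + v k := by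
  rw [(biaffHam_hasFDerivAt n ρ v w x).fderiv]
  simp [Pc, Qc, Pi.single_apply, Matrix.mulVec, dotProduct, mul_ite,
    Finset.sum_ite_eq', Finset.mul_sum, mul_comm]

lemma fderiv_biaffHam_q (n : ℕ) (ρ : Matrix (Fin n) (Fin n) ℝ) (v w : Fin n → ℝ)
    (x : ((Fin n → ℝ) × (Fin n → ℝ))) (k : Fin n) :
    fderiv ℝ (biaffHam n ρ v w) x ((0 : Fin n → ℝ), Pi.single k 1)
      = -(Matrix.vecMul x.1 ρ k) + w k := by
  rw [(biaffHam_hasFDerivAt n ρ v w x).fderiv]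
  simp [Pc, Qc, Pi.single_apply, Matrix.vecMul, dotProduct, mul_ite, ite_mul,
    Finset.sum_ite_eq', Finset.mul_sum, mul_comm]

lemma sumA (n : ℕ) (A B : Matrix (Fin n) (Fin n) ℝ) (p q : Fin n → ℝ) :
    ∑ i, A.mulVec q i * Matrix.vecMul p B i = ∑ i, p i * ((B * A).mulVec q) i := by
  have h : dotProduct (A.mulVec q) (Matrix.vecMul p B)
      = dotProduct p ((B * A).mulVec q) := by
    rw [dotProduct_comm, Matrix.dotProduct_mulVec, Matrix.vecMul_vecMul,
      ← Matrix.dotProduct_mulVec]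
  simpa [dotProduct] using h

lemma sumB (n : ℕ) (B : Matrix (Fin n) (Fin n) ℝ) (p u : Fin n → ℝ) :
    ∑ i, u i * Matrix.vecMul p B i = ∑ i, p i * B.mulVec u i := by
  have h : dotProduct u (Matrix.vecMul p B) = dotProduct p (B.mulVec u) := by
    rw [dotProduct_comm, ← Matrix.dotProduct_mulVec]
  simpa [dotProduct] using h

lemma sumC (n : ℕ) (A : Matrix (Fin n) (Fin n) ℝ) (q w : Fin n → ℝ) :
    ∑ i, A.mulVec q i * w i = ∑ i, Matrix.vecMul w A i * q i := by
  have h : dotProduct (A.mulVec q) w = dotProduct (Matrix.vecMul w A) q := by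
    rw [dotProduct_comm, Matrix.dotProduct_mulVec]
  simpa [dotProduct] using h

lemma sumA' (n : ℕ) (A B : Matrix (Fin n) (Fin n) ℝ) (p q : Fin n → ℝ) :
    ∑ i, Matrix.vecMul p A i * B.mulVec q i = ∑ i, p i * ((A * B).mulVec q) i := by
  rw [← sumA n B A p q]
  exact Finset.sum_congr rfl fun i _ => mul_comm _ _

lemma sumB' (n : ℕ) (B : Matrix (Fin n) (Fin n) ℝ) (p u : Fin n → ℝ) :
    ∑ i, Matrix.vecMul p B i * u i = ∑ i, p i * B.mulVec u i := by
  rw [← sumB n B p u]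
  exact Finset.sum_congr rfl fun i _ => mul_comm _ _

lemma sumC' (n : ℕ) (A : Matrix (Fin n) (Fin n) ℝ) (q w : Fin n → ℝ) :
    ∑ i, w i * A.mulVec q i = ∑ i, Matrix.vecMul w A i * q i := by
  rw [← sumC n A q w]
  exact Finset.sum_congr rfl fun i _ => mul_comm _ _

lemma pb_formula (n : ℕ) (ρa ρb : Matrix (Fin n) (Fin n) ℝ) (va wa vb wb : Fin n → ℝ)
    (x : (Fin n → ℝ) × (Fin n → ℝ)) :
    poissonBracket n (biaffHam n ρa va wa) (biaffHam n ρb vb wb) x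
      = biaffHam n (ρa * ρb - ρb * ρa) (ρa.mulVec vb - ρb.mulVec va)
          (Matrix.vecMul wa ρb - Matrix.vecMul wb ρa) x
        + (∑ i, wb i * va i - ∑ i, wa i * vb i) := by
  simp only [poissonBracket, fderiv_biaffHam_p, fderiv_biaffHam_q, biaffHam,
    Matrix.sub_mulVec, Pi.sub_apply, Finset.sum_sub_distrib, Finset.sum_add_distrib,
    mul_sub, sub_mul, mul_add, add_mul, neg_mul, mul_neg, neg_neg, neg_sub,
    Finset.sum_neg_distrib]
  rw [sumA n ρa ρb x.1 x.2, sumA' n ρa ρb x.1 x.2, sumB n ρb x.1 va, sumB' n ρa x.1 vb,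
    sumC n ρa x.2 wb, sumC' n ρb x.2 wa,
    show (∑ i, va i * wb i) = ∑ i, wb i * va i from
      Finset.sum_congr rfl fun i _ => mul_comm _ _]
  ring

lemma biaffHam_linear (n : ℕ) {ι : Type} [Fintype ι] (c : ι → ℝ)
    (ρ : ι → Matrix (Fin n) (Fin n) ℝ) (v w : ι → Fin n → ℝ)
    (x : (Fin n → ℝ) × (Fin n → ℝ)) :
    ∑ γ, c γ * biaffHam n (ρ γ) (v γ) (w γ) x
      = biaffHam n (∑ γ, c γ • ρ γ) (∑ γ, c γ • v γ) (∑ γ, c γ • w γ) x := by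
  simp only [biaffHam_eq, Matrix.sum_apply, Finset.sum_apply, Pi.smul_apply, smul_eq_mul,
    Finset.sum_mul, Finset.mul_sum, mul_add, mul_neg, neg_mul, Finset.sum_add_distrib,
    Finset.sum_neg_distrib, add_mul, Matrix.smul_apply]
  congr 1
  congr 1
  · exact congrArg Neg.neg (Finset.sum_comm.trans (Finset.sum_congr rfl fun i _ =>
      Finset.sum_comm.trans (Finset.sum_congr rfl fun j _ =>
        Finset.sum_congr rfl fun γ _ => by ring)))
  · exact Finset.sum_comm.trans (Finset.sum_congr rfl fun i _ =>
      Finset.sum_congr rfl fun γ _ => by ring)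
  · exact Finset.sum_comm.trans (Finset.sum_congr rfl fun i _ =>
      Finset.sum_congr rfl fun γ _ => by ring)

lemma biaffHam_00 (n : ℕ) (ρ : Matrix (Fin n) (Fin n) ℝ) (v w : Fin n → ℝ) :
    biaffHam n ρ v w ((0 : Fin n → ℝ), (0 : Fin n → ℝ)) = 0 := by
  simp [biaffHam]

lemma biaffHam_p0 (n : ℕ) (ρ : Matrix (Fin n) (Fin n) ℝ) (v w : Fin n → ℝ) (i : Fin n) :
    biaffHam n ρ v w (Pi.single i 1, (0 : Fin n → ℝ)) = v i := by
  simp [biaffHam, Pi.single_apply, ite_mul, Finset.sum_ite_eq']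

lemma biaffHam_0q (n : ℕ) (ρ : Matrix (Fin n) (Fin n) ℝ) (v w : Fin n → ℝ) (j : Fin n) :
    biaffHam n ρ v w ((0 : Fin n → ℝ), Pi.single j 1) = w j := by
  simp [biaffHam, Pi.single_apply, mul_ite, Finset.sum_ite_eq']

lemma biaffHam_pq (n : ℕ) (ρ : Matrix (Fin n) (Fin n) ℝ) (v w : Fin n → ℝ) (i j : Fin n) :
    biaffHam n ρ v w (Pi.single i 1, Pi.single j 1) = -ρ i j + v i + w j := by
  simp [biaffHam, Pi.single_apply, mul_ite, ite_mul, Finset.sum_ite_eq',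
    Matrix.mulVec, dotProduct]

/-- The biaffine Hamiltonians `H_α(p,q) = −p(ρ_α q) + p(v_α) + w_α(q)` satisfy the
involutivity relations `{H_α,H_β} = f^γ_{αβ} H_γ` (as identities of functions on
`V* × V`) if and only if:
(1) `[ρ_α,ρ_β] = f^γ_{αβ} ρ_γ`, (2) `ρ_α v_β − ρ_β v_α = f^γ_{αβ} v_γ`,
(3) `w_α ∘ ρ_β − w_β ∘ ρ_α = f^γ_{αβ} w_γ`, and (4) `w_β(v_α) = w_α(v_β)`. -/
theorem stmt19 (n : ℕ) (ι : Type) [Fintype ι]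
    (ρ : ι → Matrix (Fin n) (Fin n) ℝ) (v w : ι → Fin n → ℝ) (f : ι → ι → ι → ℝ) :
    (∀ (a b : ι) (x : (Fin n → ℝ) × (Fin n → ℝ)),
        poissonBracket n (biaffHam n (ρ a) (v a) (w a)) (biaffHam n (ρ b) (v b) (w b)) x
          = ∑ γ, f a b γ * biaffHam n (ρ γ) (v γ) (w γ) x)
      ↔ ((∀ a b : ι, ρ a * ρ b - ρ b * ρ a = ∑ γ, f a b γ • ρ γ)
        ∧ (∀ a b : ι, (ρ a).mulVec (v b) - (ρ b).mulVec (v a) = ∑ γ, f a b γ • v γ)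
        ∧ (∀ a b : ι, Matrix.vecMul (w a) (ρ b) - Matrix.vecMul (w b) (ρ a)
            = ∑ γ, f a b γ • w γ)
        ∧ (∀ a b : ι, ∑ i, w b i * v a i = ∑ i, w a i * v b i)) := by
  constructor
  · intro h
    have key : ∀ (a b : ι) (x : (Fin n → ℝ) × (Fin n → ℝ)),
        biaffHam n (ρ a * ρ b - ρ b * ρ a)
            ((ρ a).mulVec (v b) - (ρ b).mulVec (v a))
            (Matrix.vecMul (w a) (ρ b) - Matrix.vecMul (w b) (ρ a)) x
          + (∑ i, w b i * v a i - ∑ i, w a i * v b i)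
          = ∑ γ, f a b γ * biaffHam n (ρ γ) (v γ) (w γ) x := by
      intro a b x
      rw [← pb_formula]
      exact h a b x
    have h4 : ∀ a b : ι, ∑ i, w b i * v a i = ∑ i, w a i * v b i := by
      intro a b
      have := key a b ((0 : Fin n → ℝ), (0 : Fin n → ℝ))
      simp only [biaffHam_00, zero_add, mul_zero, Finset.sum_const_zero] at this
      linarith
    refine ⟨?_, ?_, ?_, h4⟩
    · intro a b
      ext i j
      have h1 := key a b (Pi.single i 1, Pi.single j 1)
      have h2 := key a b (Pi.single i 1, (0 : Fin n → ℝ))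
      have h3 := key a b ((0 : Fin n → ℝ), Pi.single j 1)
      simp only [biaffHam_pq, biaffHam_p0, biaffHam_0q, h4 a b, sub_self, add_zero,
        mul_add, mul_neg, Finset.sum_add_distrib, Finset.sum_neg_distrib] at h1 h2 h3
      rw [Matrix.sum_apply]
      simp only [Matrix.smul_apply, smul_eq_mul]
      linarith
    · intro a b
      funext i
      have h2 := key a b (Pi.single i 1, (0 : Fin n → ℝ))
      simp only [biaffHam_p0, h4 a b, sub_self, add_zero] at h2
      rw [Finset.sum_apply]
      simp only [Pi.smul_apply, smul_eq_mul]
      exact h2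
    · intro a b
      funext j
      have h3 := key a b ((0 : Fin n → ℝ), Pi.single j 1)
      simp only [biaffHam_0q, h4 a b, sub_self, add_zero] at h3
      rw [Finset.sum_apply]
      simp only [Pi.smul_apply, smul_eq_mul]
      exact h3
  · rintro ⟨h1, h2, h3, h4⟩ a b x
    rw [pb_formula, biaffHam_linear n (f a b) ρ v w x, ← h1 a b, ← h2 a b, ← h3 a b,
      h4 a b, sub_self, add_zero]
end
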